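/- arXiv:1405.1523 — 5 statements merged into one kernel-verified Lean document; each statement's English description precedes it below -/
import Mathlib

section
/- Let D and β be types and let ι be an index type with arities n : ι → ℕ. The map sending a pair (b, Ω), with b : β and Ω : ∀ i, Set ((Fin (n i) → D) × ℕ), to the sequence f : ℕ → β × (∀ i, Set (Fin (n i) → D)) given by f k = (b, fun i => {v | (v, k) ∈ Ω i}) is a bijection between β × (∀ i, Set ((Fin (n i) → D) × ℕ)) and the set of sequences f : ℕ → β × (∀ i, Set (Fin (n i) → D)) whose first components agree at all indices (i.e., (f k).1 = (f k').1 for all k, k'). -/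
/-- Proposition 1: the single-state projections give a one-to-one correspondence between
linear-time structures (a static part `b : β` together with interpretations `Ω i` of the
dynamic symbols) and sequences of single-state structures sharing the same interpretation
of the static symbols. -/
theorem ltc_structure_chain_bijection (D β ι : Type*) (n : ι → ℕ) :
    Function.Bijective
      (fun p : β × (∀ i, Set ((Fin (n i) → D) × ℕ)) =>
        (⟨fun k => (p.1, fun i => {v | (v, k) ∈ p.2 i}), fun _ _ => rfl⟩ :
          {f : ℕ → β × (∀ i, Set (Fin (n i) → D)) //
            ∀ k k' : ℕ, (f k).1 = (f k').1})) := by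
  constructor
  · rintro ⟨b, Ω⟩ ⟨b', Ω'⟩ h
    simp only [Subtype.mk.injEq] at h
    have h0 := congrFun h 0
    have hb : b = b' := congrArg Prod.fst h0
    refine Prod.ext hb (funext fun i => Set.ext fun ⟨v, k⟩ => ?_)
    have := congrFun (congrFun (congrArg Prod.snd (congrFun h k)) i) v
    exact Iff.of_eq this
  · rintro ⟨f, hf⟩
    refine ⟨⟨(f 0).1, fun i => {vk | vk.1 ∈ (f vk.2).2 i}⟩, ?_⟩
    refine Subtype.ext (funext fun k => ?_)
    exact Prod.ext (hf 0 k) rfl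
end

section
/- Let L be a first-order language, M a type equipped with a total interpretation funMap of the function symbols of L, and let relMap₁ and relMap₂ be two partial relation interpretations such that relMap₁ R v ≤p relMap₂ R v for every relation symbol R of L and every argument tuple v. Then for every bounded L-formula φ and every variable assignment, the Kleene valuation of φ under relMap₁ is ≤p the Kleene valuation of φ under relMap₂. -/
open FirstOrder FirstOrder.Language

/-- The precision order on Kleene truth values (`none` = unknown, `some b` = determinate):
`none ≤p x` for every `x`, and `some b ≤p some b'` iff `b = b'`. -/
def ple (x y : Option Bool) : Prop := ∀ b : Bool, x = some b → y = some b

/-- Kleene negation: `some b ↦ some (!b)`, `none ↦ none`. -/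
def kNot : Option Bool → Option Bool := Option.map (fun b => !b)

/-- The rank of a Kleene truth value in the truth order `some false ≤ none ≤ some true`. -/
def kRank : Option Bool → ℕ
  | some false => 0
  | none => 1
  | some true => 2

/-- Binary maximum in the truth order `some false ≤ none ≤ some true`. -/
def kOr (x y : Option Bool) : Option Bool := if kRank x ≤ kRank y then y else x

/-- The truth-order infimum of a family of Kleene truth values: `some false` if some member
is `some false`, `some true` if all members are `some true`, and `none` otherwise. -/
noncomputable def kInf {ι : Type*} (f : ι → Option Bool) : Option Bool := by
  classical exact
    if ∃ i, f i = some false then some false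
    else if ∀ i, f i = some true then some true
    else none

/-- The truth-order supremum of a family of Kleene truth values (dual to `kInf`). -/
noncomputable def kSup {ι : Type*} (f : ι → Option Bool) : Option Bool := by
  classical exact
    if ∃ i, f i = some true then some true
    else if ∀ i, f i = some false then some false
    else none

variable {L : Language} {M : Type*}

/-- The structure on `M` induced by a total interpretation of the function symbols
(relations are irrelevant; only used to realize terms). -/
def funStr (funMap : ∀ n, L.Functions n → (Fin n → M) → M) : L.Structure M :=
  ⟨fun {n} => funMap n, fun {_} _ _ => False⟩

open Classical in
/-- The Kleene valuation of a bounded formula under a total interpretation `funMap` of the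
function symbols and a partial interpretation `relMap` of the relation symbols. -/
noncomputable def Kl (funMap : ∀ n, L.Functions n → (Fin n → M) → M)
    (relMap : ∀ n, L.Relations n → (Fin n → M) → Option Bool) {α : Type*} :
    ∀ {n : ℕ}, L.BoundedFormula α n → (α → M) → (Fin n → M) → Option Bool
  | _, .falsum, _, _ => some false
  | _, .equal t₁ t₂, v, xs =>
      some (decide (@Term.realize L M (funStr funMap) _ (Sum.elim v xs) t₁ =
        @Term.realize L M (funStr funMap) _ (Sum.elim v xs) t₂))
  | _, .rel R ts, v, xs =>
      relMap _ R fun i => @Term.realize L M (funStr funMap) _ (Sum.elim v xs) (ts i)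
  | _, .imp f₁ f₂, v, xs =>
      kOr (kNot (Kl funMap relMap f₁ v xs)) (Kl funMap relMap f₂ v xs)
  | _, .all f, v, xs => kInf fun m : M => Kl funMap relMap f v (Fin.snoc xs m)


theorem ple_kNot {x y : Option Bool} (h : ple x y) : ple (kNot x) (kNot y) := by
  intro b hb
  rcases x with _ | b₀
  · simp [kNot] at hb
  · rw [h b₀ rfl]; exact hb

theorem ple_kOr {x x' y y' : Option Bool} (hx : ple x x') (hy : ple y y') :
    ple (kOr x y) (kOr x' y') := by
  intro b hb
  rcases x with _ | (_ | _) <;> rcases y with _ | (_ | _) <;>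
    rcases x' with _ | (_ | _) <;> rcases y' with _ | (_ | _) <;>
    simp_all [ple, kOr, kRank]

theorem ple_kInf {ι : Type*} {f g : ι → Option Bool} (h : ∀ i, ple (f i) (g i)) :
    ple (kInf f) (kInf g) := by
  intro b hb
  unfold kInf at hb ⊢
  split_ifs at hb with h1 h2
  · obtain ⟨i, hi⟩ := h1
    rw [if_pos ⟨i, h i false hi⟩]; exact hb
  · have hg : ∀ i, g i = some true := fun i => h i true (h2 i)
    rw [if_neg, if_pos hg]
    · exact hb
    · rintro ⟨i, hi⟩; simp [hg i] at hi


/-- The Kleene valuation is monotone with respect to the precision order on partial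
relation interpretations. -/
theorem kleene_precision_monotone
    (funMap : ∀ n, L.Functions n → (Fin n → M) → M)
    (relMap₁ relMap₂ : ∀ n, L.Relations n → (Fin n → M) → Option Bool)
    (h : ∀ (n) (R : L.Relations n) (v : Fin n → M), ple (relMap₁ n R v) (relMap₂ n R v))
    {α : Type*} {n : ℕ} (φ : L.BoundedFormula α n) (v : α → M) (xs : Fin n → M) :
    ple (Kl funMap relMap₁ φ v xs) (Kl funMap relMap₂ φ v xs) := by
  induction φ with
  | falsum => intro b hb; exact hb
  | equal t₁ t₂ => intro b hb; exact hb
  | rel R ts => exact h _ _ _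
  | imp f₁ f₂ ih₁ ih₂ => exact ple_kOr (ple_kNot (ih₁ _)) (ih₂ _)
  | all f ih => exact ple_kInf fun m => ih _
end

section
/- Let L be a first-order language, M an L-structure in Mathlib's sense, and relMap a partial relation interpretation (with the function symbols interpreted as in M) such that relMap R v ≤p some (decide (RelMap R v)) for every relation symbol R and tuple v. If an L-sentence φ is satisfied in M, then the Kleene valuation of φ under relMap is not equal to some false. -/
open FirstOrder FirstOrder.Language

variable {L : Language} {M : Type*}

lemma kOr_eq_false {x y : Option Bool} (hx : kOr x y = some false) :
    x = some false ∧ y = some false := by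
  unfold kOr at hx
  split at hx <;> rename_i hr <;> subst hx <;>
    constructor <;> first
    | rfl
    | (match x, hr with
       | some false, _ => rfl
       | some true, hr => simp [kRank] at hr
       | none, hr => simp [kRank] at hr)
    | (match y, hr with
       | some false, _ => rfl
       | some true, hr => simp [kRank] at hr
       | none, hr => simp [kRank] at hr)

lemma kOr_eq_true {x y : Option Bool} (hx : kOr x y = some true) :
    x = some true ∨ y = some true := by
  unfold kOr at hx
  split at hx <;> [right; left] <;> exact hx

lemma term_realize_funStr [I : L.Structure M] {α : Type*} (v : α → M) (t : L.Term α) :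
    @Term.realize L M (funStr (fun _ f x => Structure.funMap f x)) α v t =
      Term.realize v t := by
  induction t with
  | var => rfl
  | func f ts ih =>
      show Structure.funMap (M := M) f _ = _
      simp only [Term.realize]
      congr 1
      funext i
      exact ih i

open Classical in
lemma kleene_key {L : Language} {M : Type*} [L.Structure M]
    (relMap : ∀ n, L.Relations n → (Fin n → M) → Option Bool)
    (h : ∀ (n) (R : L.Relations n) (v : Fin n → M),
      ple (relMap n R v) (some (decide (Structure.RelMap R v))))
    {α : Type*} :
    ∀ {n : ℕ} (φ : L.BoundedFormula α n) (v : α → M) (xs : Fin n → M),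
      (φ.Realize v xs → Kl (fun _ f x => Structure.funMap f x) relMap φ v xs ≠ some false) ∧
      (¬ φ.Realize v xs → Kl (fun _ f x => Structure.funMap f x) relMap φ v xs ≠ some true) := by
  intro n φ
  induction φ with
  | falsum =>
      intro v xs
      constructor
      · intro hr; exact absurd hr (by simp [BoundedFormula.Realize])
      · intro _; simp [Kl]
  | equal t₁ t₂ =>
      intro v xs
      simp only [Kl, term_realize_funStr, BoundedFormula.realize_bdEqual]
      constructor
      · intro hr; have hr' : Term.realize (Sum.elim v xs) t₁ = Term.realize (Sum.elim v xs) t₂ := hr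
        simp [hr']
      · intro hr; have hr' : ¬ Term.realize (Sum.elim v xs) t₁ = Term.realize (Sum.elim v xs) t₂ := hr
        simp [hr']
  | rel R ts =>
      intro v xs
      simp only [Kl, term_realize_funStr, BoundedFormula.realize_rel]
      constructor
      · intro hr hk
        have := h _ R _ false hk
        simp at this
        exact this hr
      · intro hr hk
        have := h _ R _ true hk
        simp at this
        exact hr this
  | imp f₁ f₂ ih₁ ih₂ =>
      intro v xs
      simp only [Kl, BoundedFormula.realize_imp]
      constructor
      · intro hr hk
        obtain ⟨h1, h2⟩ := kOr_eq_false hk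
        have h1' : Kl (fun _ f x => Structure.funMap f x) relMap f₁ v xs = some true := by
          unfold kNot at h1
          match hK : Kl (fun _ f x => Structure.funMap f x) relMap f₁ v xs with
          | none => rw [hK] at h1; simp at h1
          | some b => rw [hK] at h1; simp at h1; cases b <;> simp_all
        by_cases hf₁ : f₁.Realize v xs
        · exact (ih₂ v xs).1 (hr hf₁) h2
        · exact (ih₁ v xs).2 hf₁ h1'
      · intro hr hk
        push_neg at hr
        obtain ⟨hf₁, hf₂⟩ := hr
        rcases kOr_eq_true hk with h1 | h2
        · have h1' : Kl (fun _ f x => Structure.funMap f x) relMap f₁ v xs = some false := by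
            unfold kNot at h1
            match hK : Kl (fun _ f x => Structure.funMap f x) relMap f₁ v xs with
            | none => rw [hK] at h1; simp at h1
            | some b => rw [hK] at h1; simp at h1; cases b <;> simp_all
          exact (ih₁ v xs).1 hf₁ h1'
        · exact (ih₂ v xs).2 hf₂ h2
  | all f ih =>
      intro v xs
      simp only [Kl, BoundedFormula.realize_all]
      constructor
      · intro hr hk
        unfold kInf at hk
        split at hk
        · rename_i hex
          obtain ⟨m, hm⟩ := hex
          exact (ih v (Fin.snoc xs m)).1 (hr m) hm
        · split at hk <;> simp_all
      · intro hr hk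
        push_neg at hr
        obtain ⟨m, hm⟩ := hr
        unfold kInf at hk
        split at hk
        · simp at hk
        · split at hk
          · rename_i hall
            exact (ih v (Fin.snoc xs m)).2 hm (hall m)
          · simp at hk

open Classical in
/-- A partial structure refined by a model of a sentence does not falsify that sentence. -/
theorem kleene_not_false_of_model {L : Language} {M : Type*} [L.Structure M]
    (relMap : ∀ n, L.Relations n → (Fin n → M) → Option Bool)
    (h : ∀ (n) (R : L.Relations n) (v : Fin n → M),
      ple (relMap n R v) (some (decide (Structure.RelMap R v))))
    (φ : L.Sentence) (hφ : M ⊨ φ) :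
    Kl (fun _ f x => Structure.funMap f x) relMap φ Empty.elim Fin.elim0 ≠ some false :=
  (kleene_key relMap h φ Empty.elim Fin.elim0).1
    (by
      have : BoundedFormula.Realize φ (default : Empty → M) (default : Fin 0 → M) := hφ
      rwa [Subsingleton.elim (Empty.elim : Empty → M) default,
        Subsingleton.elim (Fin.elim0 : Fin 0 → M) default])
end

section
/- Let s be a compatible k-chain and s' a compatible k'-chain ending in the same state, i.e., s k = s' k' (at the last indices). Then for every state u : S, the direct extension of s by u is compatible if and only if the direct extension of s' by u is compatible. -/
variable {S : Type*}

/-- A trace of the transition system `(Init, Trans)`. -/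
def IsTrace (Init : Set S) (Trans : S → S → Prop) (τ : ℕ → S) : Prop :=
  τ 0 ∈ Init ∧ ∀ n : ℕ, Trans (τ n) (τ (n + 1))

/-- A `k`-chain is compatible if it is the initial segment of some trace. -/
def Compatible (Init : Set S) (Trans : S → S → Prop) {k : ℕ} (s : Fin (k + 1) → S) : Prop :=
  ∃ τ : ℕ → S, IsTrace Init Trans τ ∧ ∀ i : Fin (k + 1), τ i = s i

/-- The direct extension of a `k`-chain `s` by a state `u`: the `(k+1)`-chain equal to `s`
on indices `≤ k` and equal to `u` at index `k+1`. -/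
def extChain {k : ℕ} (s : Fin (k + 1) → S) (u : S) : Fin (k + 1 + 1) → S :=
  fun i => if h : (i : ℕ) ≤ k then s ⟨i, by omega⟩ else u

lemma ext_compat_iff (Init : Set S) (Trans : S → S → Prop) {k : ℕ}
    (s : Fin (k + 1) → S) (hs : Compatible Init Trans s) (u : S) :
    Compatible Init Trans (extChain s u) ↔
      (Trans (s (Fin.last k)) u ∧ ∃ ρ : ℕ → S, ρ 0 = u ∧ ∀ n, Trans (ρ n) (ρ (n + 1))) := by
  constructor
  · rintro ⟨τ, ⟨h0, htr⟩, hmatch⟩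
    have hk : τ k = s (Fin.last k) := by
      have := hmatch ⟨k, by omega⟩
      simpa [extChain, Fin.last] using this
    have hk1 : τ (k + 1) = u := by
      have := hmatch ⟨k + 1, by omega⟩
      simpa [extChain] using this
    refine ⟨by rw [← hk, ← hk1]; exact htr k, fun n => τ (k + 1 + n), hk1, fun n => ?_⟩
    have := htr (k + 1 + n)
    simpa [Nat.add_assoc] using this
  · rintro ⟨htrans, ρ, hρ0, hρ⟩
    obtain ⟨τ, ⟨h0, htr⟩, hmatch⟩ := hs
    refine ⟨fun n => if n ≤ k then τ n else ρ (n - (k + 1)), ⟨by simpa using h0, fun n => ?_⟩,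
      fun i => ?_⟩
    · rcases lt_trichotomy n k with h | h | h
      · have h1 : n ≤ k := by omega
        have h2 : n + 1 ≤ k := by omega
        simpa only [h1, h2, if_true, if_pos] using htr n
      · subst h
        have hk : τ n = s (Fin.last n) := by simpa [Fin.last] using hmatch (Fin.last n)
        have h2 : ¬ n + 1 ≤ n := by omega
        simp only [le_refl, if_pos, h2, if_neg, not_false_iff, Nat.add_sub_cancel_left,
          Nat.sub_self]
        simpa [hk, hρ0] using htrans
      · have h1 : ¬ n ≤ k := by omega
        have h2 : ¬ n + 1 ≤ k := by omega
        have h3 : n + 1 - (k + 1) = n - (k + 1) + 1 := by omega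
        simp only [h1, h2, if_neg, not_false_iff, h3]
        exact hρ _
    · rcases Nat.lt_or_ge (i : ℕ) (k + 1) with h | h
      · have hik : (i : ℕ) ≤ k := by omega
        simp only [extChain, hik, dif_pos, if_pos]
        exact hmatch ⟨i, by omega⟩
      · have hik : (i : ℕ) = k + 1 := by omega
        simp [extChain, hik, hρ0]

/-- The Markov property: whether a state `u` extends a compatible chain only depends on
the last state of the chain. -/
theorem markov_property (Init : Set S) (Trans : S → S → Prop) {k k' : ℕ}
    (s : Fin (k + 1) → S) (s' : Fin (k' + 1) → S)
    (hs : Compatible Init Trans s) (hs' : Compatible Init Trans s')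
    (hlast : s (Fin.last k) = s' (Fin.last k')) (u : S) :
    Compatible Init Trans (extChain s u) ↔ Compatible Init Trans (extChain s' u) := by
  rw [ext_compat_iff Init Trans s hs u, ext_compat_iff Init Trans s' hs' u, hlast]
end

section
/- Kleene soundness: let L be a first-order language, M a type with a total interpretation funMap of the function symbols of L, and relMap a partial relation interpretation. Suppose the Kleene valuation of an L-sentence φ under relMap is some true. Then every L-structure on M whose function interpretation is funMap and whose relation interpretation refines relMap (i.e., relMap R v ≤p some (decide (RelMap R v)) for all R and v) satisfies φ. Dually, if the Kleene valuation of φ under relMap is some false, then no such structure satisfies φ. -/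
open FirstOrder FirstOrder.Language

variable {L : Language} {M : Type*}

open Classical in
/-- Kleene soundness: determinate Kleene values persist in all two-valued refinements of a
partial structure. If the Kleene valuation of a sentence is `some true`, every structure
with the given function interpretation whose relation interpretation refines the partial
one satisfies the sentence; dually for `some false`. -/
theorem kleene_soundness
    (funMap : ∀ n, L.Functions n → (Fin n → M) → M)
    (relMap : ∀ n, L.Relations n → (Fin n → M) → Option Bool)
    (φ : L.Sentence) :
    (Kl funMap relMap φ Empty.elim Fin.elim0 = some true →
      ∀ S : L.Structure M,
        (∀ (n) (f : L.Functions n) (v : Fin n → M), @Structure.funMap L M S n f v = funMap n f v) →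
        (∀ (n) (R : L.Relations n) (v : Fin n → M),
          ple (relMap n R v) (some (decide (@Structure.RelMap L M S n R v)))) →
        @Sentence.Realize L M S φ) ∧
    (Kl funMap relMap φ Empty.elim Fin.elim0 = some false →
      ∀ S : L.Structure M,
        (∀ (n) (f : L.Functions n) (v : Fin n → M), @Structure.funMap L M S n f v = funMap n f v) →
        (∀ (n) (R : L.Relations n) (v : Fin n → M),
          ple (relMap n R v) (some (decide (@Structure.RelMap L M S n R v)))) →
        ¬ @Sentence.Realize L M S φ) := by

  classical
  have hOrT : ∀ x y, kOr x y = some true ↔ (x = some true ∨ y = some true) := by decide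
  have hOrF : ∀ x y, kOr x y = some false ↔ (x = some false ∧ y = some false) := by decide
  have hNotT : ∀ x, kNot x = some true ↔ x = some false := by decide
  have hNotF : ∀ x, kNot x = some false ↔ x = some true := by decide
  have hInfT : ∀ (f : M → Option Bool), kInf f = some true → ∀ i, f i = some true := by
    intro f h i
    unfold kInf at h
    split_ifs at h with h1 h2
    · simp at h
    · exact h2 i
  have hInfF : ∀ (f : M → Option Bool), kInf f = some false → ∃ i, f i = some false := by
    intro f h
    unfold kInf at h
    split_ifs at h with h1 h2
    · exact h1
    · simp at h
  have hterm : ∀ (S : L.Structure M),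
      (∀ (n) (f : L.Functions n) (v : Fin n → M),
        @Structure.funMap L M S n f v = funMap n f v) →
      ∀ {β : Type} (e : β → M) (t : L.Term β),
        @Term.realize L M S β e t = @Term.realize L M (funStr funMap) β e t := by
    intro S hfun β e t
    induction t with
    | var => rfl
    | func f ts ih =>
      simp only [Term.realize]
      rw [hfun]
      show funMap _ f _ = @Structure.funMap L M (funStr funMap) _ f _
      congr 1
      exact funext fun i => ih i
  have main : ∀ {n : ℕ} (ψ : L.BoundedFormula Empty n) (S : L.Structure M)
      (_ : ∀ (n) (f : L.Functions n) (v : Fin n → M),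
        @Structure.funMap L M S n f v = funMap n f v)
      (_ : ∀ (n) (R : L.Relations n) (v : Fin n → M),
        ple (relMap n R v) (some (decide (@Structure.RelMap L M S n R v))))
      (v : Empty → M) (xs : Fin n → M),
      (Kl funMap relMap ψ v xs = some true → @BoundedFormula.Realize L M S Empty n ψ v xs) ∧
      (Kl funMap relMap ψ v xs = some false →
        ¬ @BoundedFormula.Realize L M S Empty n ψ v xs) := by
    intro n ψ S hfun hrel
    induction ψ with
    | falsum =>
      intro v xs
      refine ⟨fun h => ?_, fun _ h => h⟩
      simp [Kl] at h
    | equal t₁ t₂ =>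
      intro v xs
      simp only [Kl, BoundedFormula.Realize, hterm S hfun]
      exact ⟨fun h => of_decide_eq_true (Option.some.inj h),
        fun h => of_decide_eq_false (Option.some.inj h)⟩
    | rel R ts =>
      intro v xs
      simp only [Kl, BoundedFormula.Realize]
      have hts : (fun i => @Term.realize L M (funStr funMap) _ (Sum.elim v xs) (ts i)) =
          (fun i => @Term.realize L M S _ (Sum.elim v xs) (ts i)) :=
        funext fun i => (hterm S hfun _ _).symm
      constructor
      · intro h
        have h2 := of_decide_eq_true (Option.some.inj (hrel _ R _ true h))
        rw [← hts]
        exact h2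
      · intro h hR
        have h2 := of_decide_eq_false (Option.some.inj (hrel _ R _ false h))
        rw [← hts] at hR
        exact h2 hR
    | imp f₁ f₂ ih₁ ih₂ =>
      intro v xs
      simp only [Kl]
      constructor
      · intro h
        rcases (hOrT _ _).1 h with h' | h'
        · intro hr
          exact absurd hr ((ih₁ v xs).2 ((hNotT _).1 h'))
        · exact fun _ => (ih₂ v xs).1 h'
      · intro h
        obtain ⟨h1, h2⟩ := (hOrF _ _).1 h
        intro hr
        exact (ih₂ v xs).2 h2 (hr ((ih₁ v xs).1 ((hNotF _).1 h1)))
    | all f ih =>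
      intro v xs
      simp only [Kl]
      constructor
      · intro h m
        exact (ih v _).1 (hInfT _ h m)
      · intro h hr
        obtain ⟨m, hm⟩ := hInfF _ h
        exact (ih v _).2 hm (hr m)
  constructor
  · intro h S hfun hrel
    have := (main φ S hfun hrel Empty.elim Fin.elim0).1 h
    have he : (Empty.elim : Empty → M) = default := Subsingleton.elim _ _
    have hx : (Fin.elim0 : Fin 0 → M) = default := Subsingleton.elim _ _
    rw [he, hx] at this
    exact this
  · intro h S hfun hrel hS
    have := (main φ S hfun hrel Empty.elim Fin.elim0).2 h
    have he : (Empty.elim : Empty → M) = default := Subsingleton.elim _ _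
    have hx : (Fin.elim0 : Fin 0 → M) = default := Subsingleton.elim _ _
    rw [he, hx] at this
    exact this hS
end
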